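/- Let C be an n×n complex matrix with ‖C‖ ≤ 1. For t ∈ ℝ define H(t) = (1/2)(e^{−it}C + e^{it}C*) and K(t) = (i/2)(e^{it}C* − e^{−it}C). Then: (1) the statement 'tr( (μI − H(t))^{−1} K(t) ) = 0 for every t ∈ ℝ and every μ ∈ ℂ for which μI − H(t) is invertible' holds if and only if P_C(x,y) = det(I − xC − yC*) depends only on the product xy; (2) the statement 'tr( (λ²I − λH(t) − (1/4)(I − C*C))^{−1} λK(t) ) = 0 for every t ∈ ℝ and every λ ∈ ℂ for which λ²I − λH(t) − (1/4)(I − C*C) is invertible' holds if and only if Q_C(x,y) = det(I − xC − yC* − xy(I − C*C)) depends only on the product xy. -/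

import Mathlib

open Matrix Complex Polynomial

/-- `P_C(x, y) = det(I - x C - y Cᴴ)`. -/
noncomputable def Pfun {n : ℕ} (C : Matrix (Fin n) (Fin n) ℂ) (x y : ℂ) : ℂ :=
  Matrix.det ((1 : Matrix (Fin n) (Fin n) ℂ) - x • C - y • Cᴴ)

/-- `Q_C(x, y) = det(I - x C - y Cᴴ - x y (I - Cᴴ C))`. -/
noncomputable def Qfun {n : ℕ} (C : Matrix (Fin n) (Fin n) ℂ) (x y : ℂ) : ℂ :=
  Matrix.det ((1 : Matrix (Fin n) (Fin n) ℂ) - x • C - y • Cᴴ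
    - (x * y) • ((1 : Matrix (Fin n) (Fin n) ℂ) - Cᴴ * C))

/-- `H(t) = (1/2)(e^{-it} C + e^{it} Cᴴ)`. -/
noncomputable def Hm {n : ℕ} (C : Matrix (Fin n) (Fin n) ℂ) (t : ℝ) :
    Matrix (Fin n) (Fin n) ℂ :=
  (1 / 2 : ℂ) • (Complex.exp (-(t : ℂ) * Complex.I) • C
    + Complex.exp ((t : ℂ) * Complex.I) • Cᴴ)

/-- `K(t) = (i/2)(e^{it} Cᴴ - e^{-it} C)`. -/
noncomputable def Km {n : ℕ} (C : Matrix (Fin n) (Fin n) ℂ) (t : ℝ) :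
    Matrix (Fin n) (Fin n) ℂ :=
  (Complex.I / 2) • (Complex.exp ((t : ℂ) * Complex.I) • Cᴴ
    - Complex.exp (-(t : ℂ) * Complex.I) • C)

set_option maxHeartbeats 1000000
set_option synthInstance.maxHeartbeats 400000

namespace Stmt10Proof

variable {n : ℕ}


lemma eval_eq_of_infinite {p q : ℂ[X]} {S : Set ℂ} (hS : S.Infinite)
    (h : ∀ s ∈ S, p.eval s = q.eval s) (x : ℂ) : p.eval x = q.eval x := by
  have h0 : p - q = 0 := by
    apply Polynomial.eq_zero_of_infinite_isRoot
    apply hS.mono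
    intro s hs
    simp [Polynomial.IsRoot, h s hs]
  rw [sub_eq_zero.mp h0]

lemma infinite_small : {s : ℂ | s ≠ 0 ∧ ‖s‖ ≤ 4⁻¹}.Infinite := by
  apply Set.infinite_of_injective_forall_mem (f := fun k : ℕ => ((k + 4 : ℕ) : ℂ)⁻¹)
  · intro a b hab
    simp only [_root_.inv_inj, Nat.cast_inj] at hab
    omega
  · intro k
    constructor
    · simp only [ne_eq, inv_eq_zero, Nat.cast_eq_zero]; omega
    · rw [norm_inv, Complex.norm_natCast]
      rw [inv_le_inv₀ (by positivity) (by norm_num)]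
      exact_mod_cast by omega

lemma infinite_nonzero : {s : ℂ | s ≠ 0}.Infinite := by
  apply Set.infinite_of_injective_forall_mem (f := fun k : ℕ => ((k + 1 : ℕ) : ℂ))
  · intro a b hab
    simp only [Nat.cast_inj] at hab; omega
  · intro k
    simp only [Set.mem_setOf_eq, ne_eq, Nat.cast_eq_zero]; omega

lemma infinite_circle : {u : ℂ | ∃ t : ℝ, u = Complex.exp ((t:ℂ) * Complex.I)}.Infinite := by
  apply Set.infinite_of_injective_forall_mem
    (f := fun k : ℕ => Complex.exp ((((k:ℝ) + 1)⁻¹ : ℝ) * Complex.I))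
  · intro a b hab
    simp only at hab
    rw [Complex.exp_eq_exp_iff_exists_int] at hab
    obtain ⟨m, hm⟩ := hab
    have hre : ((a:ℝ)+1)⁻¹ = ((b:ℝ)+1)⁻¹ + (m:ℝ)*(2*Real.pi) := by
      have h2 : ((((a:ℝ)+1)⁻¹ : ℝ) : ℂ) * I = ((((b:ℝ)+1)⁻¹ : ℝ) + (m:ℂ)*(2*(Real.pi:ℝ))) * I := by
        rw [hm]; push_cast; ring
      have h3 := mul_right_cancel₀ Complex.I_ne_zero h2
      exact_mod_cast h3
    have h1a : (0:ℝ) < ((a:ℝ)+1)⁻¹ := by positivity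
    have h1b : (0:ℝ) < ((b:ℝ)+1)⁻¹ := by positivity
    have h2a : ((a:ℝ)+1)⁻¹ ≤ 1 := by
      rw [inv_le_one_iff₀]; right; linarith [Nat.cast_nonneg (α := ℝ) a]
    have h2b : ((b:ℝ)+1)⁻¹ ≤ 1 := by
      rw [inv_le_one_iff₀]; right; linarith [Nat.cast_nonneg (α := ℝ) b]
    have hm0 : m = 0 := by
      by_contra hm0
      have h5 : (1:ℝ) ≤ |(m:ℝ)| := by
        have : (1:ℤ) ≤ |m| := Int.one_le_abs hm0
        calc (1:ℝ) ≤ ((|m| : ℤ) : ℝ) := by exact_mod_cast this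
        _ = |(m:ℝ)| := by push_cast; rfl
      have hd : |((a:ℝ)+1)⁻¹ - ((b:ℝ)+1)⁻¹| < 6 := by
        rw [abs_lt]; constructor <;> nlinarith
      rw [show ((a:ℝ)+1)⁻¹ - ((b:ℝ)+1)⁻¹ = (m:ℝ)*(2*Real.pi) from by linarith] at hd
      rw [abs_mul, abs_of_pos (by positivity : (0:ℝ) < 2*Real.pi)] at hd
      nlinarith [Real.pi_gt_three]
    rw [hm0] at hre
    simp only [Int.cast_zero, zero_mul, add_zero, _root_.inv_inj] at hre
    have h' : (a:ℝ) = b := by linarith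
    exact_mod_cast h'
  · intro k
    exact ⟨((k:ℝ)+1)⁻¹, rfl⟩



lemma poly_eq_zero_of_forall {p : ℂ[X]} (h : ∀ z : ℂ, p.eval z = 0) : p = 0 := by
  apply Polynomial.eq_zero_of_infinite_isRoot
  apply Set.infinite_of_injective_forall_mem (f := fun k : ℕ => (k : ℂ))
  · intro a b hab
    simpa using hab
  · intro k; exact h _

lemma exists_poly_of_even {r : ℂ[X]} (h : ∀ z : ℂ, r.eval (-z) = r.eval z) :
    ∃ q : ℂ[X], ∀ z : ℂ, r.eval z = q.eval (z ^ 2) := by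
  set N := r.natDegree with hN
  have hodd : ∀ m, Odd m → r.coeff m = 0 := by
    set u : ℂ[X] := ∑ m ∈ Finset.range (N + 1), if Odd m then C (r.coeff m) * X ^ m else 0 with hu
    have hueval : ∀ z : ℂ, u.eval z * 2 = r.eval z - r.eval (-z) := by
      intro z
      rw [Polynomial.eval_eq_sum_range' (Nat.lt_succ_self N) z,
        Polynomial.eval_eq_sum_range' (Nat.lt_succ_self N) (-z), hu]
      rw [Polynomial.eval_finset_sum, Finset.sum_mul, ← Finset.sum_sub_distrib]
      apply Finset.sum_congr rfl
      intro m _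
      rcases Nat.even_or_odd m with he | ho
      · rw [if_neg (Nat.not_odd_iff_even.mpr he), he.neg_pow]
        simp
      · rw [if_pos ho, ho.neg_pow]
        simp
        ring
    have hu0 : u = 0 := by
      apply poly_eq_zero_of_forall
      intro z
      have := hueval z
      rw [h z, sub_self] at this
      have h2 : (2:ℂ) ≠ 0 := by norm_num
      exact (mul_eq_zero.mp this).resolve_right h2
    intro m hm
    by_cases hmN : m ≤ N
    · have := congrArg (fun p => Polynomial.coeff p m) hu0
      simp only [hu, Polynomial.finset_sum_coeff, Polynomial.coeff_zero] at this
      rw [Finset.sum_eq_single m] at this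
      · rw [if_pos hm, Polynomial.coeff_C_mul, Polynomial.coeff_X_pow, if_pos rfl] at this
        simpa using this
      · intro b _ hbm
        split
        · rw [Polynomial.coeff_C_mul, Polynomial.coeff_X_pow, if_neg (by omega)]
          ring
        · simp
      · intro hmem
        exact absurd (Finset.mem_range.mpr (by omega)) hmem
    · exact Polynomial.coeff_eq_zero_of_natDegree_lt (by omega)
  refine ⟨∑ k ∈ Finset.range (N + 1), C (r.coeff (2 * k)) * X ^ k, ?_⟩
  intro z
  have hq : Polynomial.eval (z ^ 2) (∑ k ∈ Finset.range (N + 1), C (r.coeff (2 * k)) * X ^ k)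
      = ∑ k ∈ Finset.range (N + 1), r.coeff (2 * k) * z ^ (2 * k) := by
    rw [Polynomial.eval_finset_sum]
    apply Finset.sum_congr rfl
    intro k _
    rw [Polynomial.eval_mul, Polynomial.eval_C, Polynomial.eval_pow, Polynomial.eval_X, ← pow_mul]
  rw [hq, Polynomial.eval_eq_sum_range' (show N < 2 * (N + 1) by omega) z]
  rw [← Finset.sum_filter_add_sum_filter_not (Finset.range (2 * (N + 1))) (fun m => Even m)]
  have hoddzero : ∑ m ∈ Finset.filter (fun m => ¬ Even m) (Finset.range (2 * (N + 1))),
      r.coeff m * z ^ m = 0 := by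
    apply Finset.sum_eq_zero
    intro m hm
    rw [Finset.mem_filter] at hm
    rw [hodd m (Nat.not_even_iff_odd.mp hm.2), zero_mul]
  rw [hoddzero, add_zero]
  apply Finset.sum_nbij' (i := fun m => m / 2) (j := fun k => 2 * k)
  · intro m hm
    rw [Finset.mem_filter, Finset.mem_range] at hm
    rw [Finset.mem_range]
    omega
  · intro k hk
    rw [Finset.mem_range] at hk
    rw [Finset.mem_filter, Finset.mem_range]
    exact ⟨by omega, even_two_mul k⟩
  · intro m hm
    rw [Finset.mem_filter] at hm
    obtain ⟨c, hc⟩ := hm.2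
    omega
  · intro k _
    omega
  · intro m hm
    rw [Finset.mem_filter] at hm
    obtain ⟨c, hc⟩ := hm.2
    have : 2 * (m / 2) = m := by omega
    rw [this]



variable {n : ℕ}

noncomputable def detPoly (A₀ A₁ A₂ : Matrix (Fin n) (Fin n) ℂ) : ℂ[X] :=
  Matrix.det (A₀.map Polynomial.C + (X : ℂ[X]) • A₁.map Polynomial.C
    + (X ^ 2 : ℂ[X]) • A₂.map Polynomial.C)

lemma detPoly_eval (A₀ A₁ A₂ : Matrix (Fin n) (Fin n) ℂ) (x : ℂ) :
    (detPoly A₀ A₁ A₂).eval x = Matrix.det (A₀ + x • A₁ + x ^ 2 • A₂) := by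
  rw [detPoly, show Polynomial.eval x = ⇑(Polynomial.evalRingHom x) from rfl,
    RingHom.map_det]
  congr 1
  ext i j
  simp only [RingHom.mapMatrix_apply, Matrix.map_apply, Matrix.add_apply, Matrix.smul_apply,
    smul_eq_mul, coe_evalRingHom, eval_add, eval_mul, eval_C, eval_X, eval_pow]

lemma hasDerivAt_det_of_one {N : ℝ → Matrix (Fin n) (Fin n) ℂ} {N' : Matrix (Fin n) (Fin n) ℂ}
    {t₀ : ℝ} (hd : ∀ i j, HasDerivAt (fun t => N t i j) (N' i j) t₀) (h1 : N t₀ = 1) :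
    HasDerivAt (fun t => (N t).det) N'.trace t₀ := by
  have key : (fun t => (N t).det)
      = fun t => ∑ σ : Equiv.Perm (Fin n), (Equiv.Perm.sign σ : ℂ) * ∏ i, N t (σ i) i := by
    funext t
    exact Matrix.det_apply' (N t)
  rw [key]
  have hterm : ∀ σ : Equiv.Perm (Fin n),
      HasDerivAt (fun t => (Equiv.Perm.sign σ : ℂ) * ∏ i, N t (σ i) i)
        ((Equiv.Perm.sign σ : ℂ) *
          ∑ i, (∏ j ∈ Finset.univ.erase i, N t₀ (σ j) j) * N' (σ i) i) t₀ := by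
    intro σ
    refine HasDerivAt.const_mul _ ?_
    have := HasDerivAt.fun_finsetProd (u := Finset.univ)
      (f := fun i t => N t (σ i) i) (f' := fun i => N' (σ i) i) (fun i _ => hd (σ i) i)
    simpa [smul_eq_mul] using this
  have hsum := HasDerivAt.fun_sum (u := Finset.univ) (fun σ _ => hterm σ)
  have hval : ∑ σ : Equiv.Perm (Fin n), (Equiv.Perm.sign σ : ℂ) *
      ∑ i, (∏ j ∈ Finset.univ.erase i, N t₀ (σ j) j) * N' (σ i) i = N'.trace := by
    rw [Finset.sum_eq_single (1 : Equiv.Perm (Fin n))]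
    · simp only [Equiv.Perm.sign_one, Units.val_one, Int.cast_one, one_mul,
        Equiv.Perm.one_apply, h1]
      rw [Matrix.trace]
      apply Finset.sum_congr rfl
      intro i _
      simp [Matrix.one_apply_eq, Matrix.diag]
    · intro σ _ hσ
      have h2 : 1 < σ.support.card := Equiv.Perm.one_lt_card_support_of_ne_one hσ
      have hz : ∀ i : Fin n, (∏ j ∈ Finset.univ.erase i, N t₀ (σ j) j) * N' (σ i) i = 0 := by
        intro i
        obtain ⟨j, hjs, hji⟩ := Finset.exists_mem_ne h2 i
        have : N t₀ (σ j) j = 0 := by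
          rw [h1]
          exact Matrix.one_apply_ne (Equiv.Perm.mem_support.mp hjs)
        exact mul_eq_zero_of_left
          (Finset.prod_eq_zero (f := fun j' => N t₀ (σ j') j')
            (Finset.mem_erase.mpr ⟨hji, Finset.mem_univ j⟩) this) _
      rw [Finset.sum_congr rfl (fun i _ => hz i), Finset.sum_const_zero, mul_zero]
    · intro h; exact absurd (Finset.mem_univ _) h
  rw [← hval]
  exact hsum

lemma hasDerivAt_det_of_isUnit {M : ℝ → Matrix (Fin n) (Fin n) ℂ}
    {M' : Matrix (Fin n) (Fin n) ℂ} {t₀ : ℝ}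
    (hd : ∀ i j, HasDerivAt (fun t => M t i j) (M' i j) t₀) (hu : IsUnit (M t₀)) :
    HasDerivAt (fun t => (M t).det) ((M t₀).det * (((M t₀)⁻¹ * M').trace)) t₀ := by
  set A := M t₀ with hA
  have hdet : IsUnit A.det := (Matrix.isUnit_iff_isUnit_det _).mp hu
  have hN : ∀ i j, HasDerivAt (fun t => (A⁻¹ * M t) i j) ((A⁻¹ * M') i j) t₀ := by
    intro i j
    simp only [Matrix.mul_apply]
    exact HasDerivAt.fun_sum fun k _ => (hd k j).const_mul (A⁻¹ i k)
  have h1 : A⁻¹ * M t₀ = 1 := Matrix.nonsing_inv_mul A hdet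
  have hDet := (hasDerivAt_det_of_one hN h1).const_mul A.det
  have hfun : (fun t => A.det * (A⁻¹ * M t).det) = fun t => (M t).det := by
    funext t
    rw [Matrix.det_mul, ← mul_assoc, ← Matrix.det_mul, Matrix.mul_nonsing_inv A hdet,
      Matrix.det_one, one_mul]
  rw [hfun] at hDet
  exact hDet

lemma trace_eq_zero_of_const {M : ℝ → Matrix (Fin n) (Fin n) ℂ}
    {M' : Matrix (Fin n) (Fin n) ℂ} {t₀ : ℝ}
    (hd : ∀ i j, HasDerivAt (fun t => M t i j) (M' i j) t₀) (hu : IsUnit (M t₀))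
    (hconst : ∀ t, (M t).det = (M 0).det) : ((M t₀)⁻¹ * M').trace = 0 := by
  have h1 := hasDerivAt_det_of_isUnit hd hu
  have h2 : HasDerivAt (fun t => (M t).det) 0 t₀ := by
    have : (fun t => (M t).det) = fun _ => (M 0).det := funext hconst
    rw [this]
    exact hasDerivAt_const _ _
  have h3 := h1.unique h2
  have hdet : IsUnit (M t₀).det := (Matrix.isUnit_iff_isUnit_det _).mp hu
  exact (mul_eq_zero.mp h3).resolve_left hdet.ne_zero

lemma det_const_of_deriv_zero {M : ℝ → Matrix (Fin n) (Fin n) ℂ}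
    {M' : ℝ → Matrix (Fin n) (Fin n) ℂ}
    (hd : ∀ t₀ i j, HasDerivAt (fun t => M t i j) (M' t₀ i j) t₀)
    (hu : ∀ t, IsUnit (M t))
    (htr : ∀ t, ((M t)⁻¹ * M' t).trace = 0) : ∀ t, (M t).det = (M 0).det := by
  have hD : ∀ t₀, HasDerivAt (fun t => (M t).det) 0 t₀ := by
    intro t₀
    have := hasDerivAt_det_of_isUnit (fun i j => hd t₀ i j) (hu t₀)
    rwa [htr t₀, mul_zero] at this
  intro t
  exact is_const_of_deriv_eq_zero (fun t₀ => (hD t₀).differentiableAt)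
    (fun t₀ => (hD t₀).deriv) t 0


variable {n : ℕ}

-- exp derivative lemmas
lemma hasDerivAt_expI (t₀ : ℝ) :
    HasDerivAt (fun t : ℝ => Complex.exp ((t : ℂ) * I)) (I * Complex.exp ((t₀ : ℂ) * I)) t₀ := by
  have h1 : HasDerivAt (fun t : ℝ => ((t : ℂ) * I)) I t₀ := by
    simpa using (Complex.ofRealCLM.hasDerivAt (x := t₀)).mul_const I
  simpa [mul_comm] using h1.cexp

lemma hasDerivAt_expNegI (t₀ : ℝ) :
    HasDerivAt (fun t : ℝ => Complex.exp (-(t : ℂ) * I)) (-I * Complex.exp (-(t₀ : ℂ) * I)) t₀ := by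
  have h1 : HasDerivAt (fun t : ℝ => (-(t : ℂ) * I)) (-I) t₀ := by
    simpa using ((Complex.ofRealCLM.hasDerivAt (x := t₀)).neg.mul_const I)
  simpa [mul_comm] using h1.cexp

lemma hasDerivAt_Hm (C : Matrix (Fin n) (Fin n) ℂ) (t₀ : ℝ) (i j : Fin n) :
    HasDerivAt (fun t => Hm C t i j) (Km C t₀ i j) t₀ := by
  have h3 := (((hasDerivAt_expNegI t₀).mul_const (C i j)).fun_add
    ((hasDerivAt_expI t₀).mul_const (Cᴴ i j))).const_mul ((1 : ℂ) / 2)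
  have hfun : (fun t => Hm C t i j) = fun t : ℝ => (1 / 2 : ℂ) *
      (Complex.exp (-(t : ℂ) * I) * C i j + Complex.exp ((t : ℂ) * I) * Cᴴ i j) := by
    funext t
    simp [Hm, Matrix.smul_apply, Matrix.add_apply, smul_eq_mul]
  rw [hfun]
  refine h3.congr_deriv ?_
  simp only [Km, Matrix.smul_apply, Matrix.sub_apply, smul_eq_mul]
  ring

lemma hasDerivAt_M1 (C : Matrix (Fin n) (Fin n) ℂ) (μ : ℂ) (t₀ : ℝ) (i j : Fin n) :
    HasDerivAt (fun t => (μ • (1 : Matrix (Fin n) (Fin n) ℂ) - Hm C t) i j)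
      ((-Km C t₀) i j) t₀ := by
  simp only [Matrix.sub_apply, Matrix.neg_apply]
  exact (hasDerivAt_Hm C t₀ i j).const_sub _

lemma hasDerivAt_M2 (C : Matrix (Fin n) (Fin n) ℂ) (lam : ℂ) (t₀ : ℝ) (i j : Fin n) :
    HasDerivAt (fun t => (lam ^ 2 • (1 : Matrix (Fin n) (Fin n) ℂ) - lam • Hm C t
        - (1 / 4 : ℂ) • ((1 : Matrix (Fin n) (Fin n) ℂ) - Cᴴ * C)) i j)
      ((-(lam • Km C t₀)) i j) t₀ := by
  simp only [Matrix.sub_apply, Matrix.neg_apply, Matrix.smul_apply, smul_eq_mul]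
  have := (((hasDerivAt_Hm C t₀ i j).const_mul lam).const_sub
    ((lam ^ 2 • (1 : Matrix (Fin n) (Fin n) ℂ)) i j)).sub_const
    (((1 / 4 : ℂ) • ((1 : Matrix (Fin n) (Fin n) ℂ) - Cᴴ * C)) i j)
  simp only [Matrix.sub_apply, Matrix.smul_apply, smul_eq_mul] at this
  exact this

-- unit lemmas
lemma isUnit_matrix_iff (A : Matrix (Fin n) (Fin n) ℂ) :
    IsUnit A ↔ IsUnit (Matrix.toEuclideanCLM (𝕜 := ℂ) A) := by
  constructor
  · intro h; exact h.map _
  · intro h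
    have h2 := h.map (Matrix.toEuclideanCLM (𝕜 := ℂ)).symm
    simpa using h2

lemma isUnit_shift {A : Type*} [NormedRing A] [NormedAlgebra ℂ A] [CompleteSpace A]
    (a : A) (μ : ℂ) (h : ‖a‖ < ‖μ‖) : IsUnit (μ • (1 : A) - a) := by
  have hμ : μ ≠ 0 := by
    rintro rfl
    simp only [norm_zero] at h
    exact absurd h (norm_nonneg a).not_gt
  have hμ' : (0 : ℝ) < ‖μ‖ := lt_of_le_of_lt (norm_nonneg a) h
  have hb : ‖μ⁻¹ • a‖ < 1 := by
    rw [norm_smul, norm_inv]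
    calc ‖μ‖⁻¹ * ‖a‖ < ‖μ‖⁻¹ * ‖μ‖ := by
          exact mul_lt_mul_of_pos_left h (inv_pos.mpr hμ')
    _ = 1 := inv_mul_cancel₀ hμ'.ne'
  have hu1 : IsUnit ((1 : A) - μ⁻¹ • a) := (Units.oneSub _ hb).isUnit
  have hu2 : IsUnit (μ • (1 : A)) := by
    refine ⟨⟨μ • 1, μ⁻¹ • 1, ?_, ?_⟩, rfl⟩
    · rw [smul_mul_smul_comm, one_mul, mul_inv_cancel₀ hμ, one_smul]
    · rw [smul_mul_smul_comm, one_mul, inv_mul_cancel₀ hμ, one_smul]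
  have key : μ • (1 : A) - a = (μ • 1) * ((1 : A) - μ⁻¹ • a) := by
    rw [mul_sub, mul_one, smul_mul_assoc, one_mul, smul_smul, mul_inv_cancel₀ hμ, one_smul]
  rw [key]
  exact hu2.mul hu1

lemma norm_exp_I (t : ℝ) : ‖Complex.exp ((t : ℂ) * I)‖ = 1 := by
  exact Complex.norm_exp_ofReal_mul_I t

lemma norm_exp_negI (t : ℝ) : ‖Complex.exp (-(t : ℂ) * I)‖ = 1 := by
  have : (-(t : ℂ) * I) = ((-t : ℝ) : ℂ) * I := by push_cast; ring
  rw [this]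
  exact Complex.norm_exp_ofReal_mul_I (-t)

lemma norm_CLM_Hm (C : Matrix (Fin n) (Fin n) ℂ)
    (hC : ‖Matrix.toEuclideanCLM (𝕜 := ℂ) C‖ ≤ 1) (t : ℝ) :
    ‖Matrix.toEuclideanCLM (𝕜 := ℂ) (Hm C t)‖ ≤ 1 := by
  set φ := Matrix.toEuclideanCLM (𝕜 := ℂ) (n := Fin n)
  have hCH : ‖φ Cᴴ‖ ≤ 1 := by
    have h1 : φ Cᴴ = star (φ C) := by
      rw [← Matrix.star_eq_conjTranspose, map_star]
    rw [h1, ContinuousLinearMap.star_eq_adjoint,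
      LinearIsometryEquiv.norm_map ContinuousLinearMap.adjoint (φ C)]
    exact hC
  have hφ : φ (Hm C t) = (1 / 2 : ℂ) • (Complex.exp (-(t : ℂ) * I) • φ C
      + Complex.exp ((t : ℂ) * I) • φ Cᴴ) := by
    rw [Hm, _root_.map_smul, map_add, _root_.map_smul, _root_.map_smul]
  rw [hφ]
  have b1 : ‖Complex.exp (-(t : ℂ) * I) • φ C‖ ≤ 1 := by
    refine le_trans (norm_smul_le (Complex.exp (-(t : ℂ) * I)) (φ C)) ?_
    rw [norm_exp_negI, one_mul]
    exact hC
  have b2 : ‖Complex.exp ((t : ℂ) * I) • φ Cᴴ‖ ≤ 1 := by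
    refine le_trans (norm_smul_le (Complex.exp ((t : ℂ) * I)) (φ Cᴴ)) ?_
    rw [norm_exp_I, one_mul]
    exact hCH
  refine le_trans (norm_smul_le ((1 : ℂ) / 2)
    (Complex.exp (-(t : ℂ) * I) • φ C + Complex.exp ((t : ℂ) * I) • φ Cᴴ)) ?_
  have hadd := norm_add_le (Complex.exp (-(t : ℂ) * I) • φ C) (Complex.exp ((t : ℂ) * I) • φ Cᴴ)
  have hhalf : ‖(1 / 2 : ℂ)‖ = 1 / 2 := by
    simp [map_div₀]
  rw [hhalf]
  linarith

lemma isUnit_M1 (C : Matrix (Fin n) (Fin n) ℂ)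
    (hC : ‖Matrix.toEuclideanCLM (𝕜 := ℂ) C‖ ≤ 1) {μ : ℂ} (hμ : 2 ≤ ‖μ‖) (t : ℝ) :
    IsUnit (μ • (1 : Matrix (Fin n) (Fin n) ℂ) - Hm C t) := by
  rw [isUnit_matrix_iff, map_sub, _root_.map_smul, _root_.map_one]
  apply isUnit_shift
  calc ‖Matrix.toEuclideanCLM (𝕜 := ℂ) (Hm C t)‖ ≤ 1 := norm_CLM_Hm C hC t
  _ < ‖μ‖ := by linarith

lemma isUnit_M2 (C : Matrix (Fin n) (Fin n) ℂ)
    (hC : ‖Matrix.toEuclideanCLM (𝕜 := ℂ) C‖ ≤ 1) {lam : ℂ} (hμ : 2 ≤ ‖lam‖) (t : ℝ) :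
    IsUnit (lam ^ 2 • (1 : Matrix (Fin n) (Fin n) ℂ) - lam • Hm C t
      - (1 / 4 : ℂ) • ((1 : Matrix (Fin n) (Fin n) ℂ) - Cᴴ * C)) := by
  set φ := Matrix.toEuclideanCLM (𝕜 := ℂ) (n := Fin n)
  have key : lam ^ 2 • (1 : Matrix (Fin n) (Fin n) ℂ) - lam • Hm C t
      - (1 / 4 : ℂ) • ((1 : Matrix (Fin n) (Fin n) ℂ) - Cᴴ * C)
      = lam ^ 2 • (1 : Matrix (Fin n) (Fin n) ℂ)
        - (lam • Hm C t + (1 / 4 : ℂ) • ((1 : Matrix (Fin n) (Fin n) ℂ) - Cᴴ * C)) := by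
    rw [sub_sub]
  rw [key, isUnit_matrix_iff, map_sub, _root_.map_smul, _root_.map_one,
    map_add, _root_.map_smul, _root_.map_smul]
  apply isUnit_shift
  have hCH : ‖φ Cᴴ‖ ≤ 1 := by
    have h1 : φ Cᴴ = star (φ C) := by rw [← Matrix.star_eq_conjTranspose, map_star]
    rw [h1, ContinuousLinearMap.star_eq_adjoint,
      LinearIsometryEquiv.norm_map ContinuousLinearMap.adjoint (φ C)]
    exact hC
  have h2 : ‖φ ((1 : Matrix (Fin n) (Fin n) ℂ) - Cᴴ * C)‖ ≤ 2 := by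
    rw [map_sub, _root_.map_one, _root_.map_mul]
    refine le_trans (norm_sub_le _ _) ?_
    have hone : ‖(1 : EuclideanSpace ℂ (Fin n) →L[ℂ] EuclideanSpace ℂ (Fin n))‖ ≤ 1 := by
      rw [ContinuousLinearMap.one_def]
      exact ContinuousLinearMap.norm_id_le
    have hmul := norm_mul_le (φ Cᴴ) (φ C)
    nlinarith [norm_nonneg (φ Cᴴ), norm_nonneg (φ C)]
  have habs : (2 : ℝ) ≤ ‖lam‖ := by exact hμ
  have b1 : ‖lam • φ (Hm C t)‖ ≤ ‖lam‖ := by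
    refine le_trans (norm_smul_le lam (φ (Hm C t))) ?_
    have := norm_CLM_Hm C hC t
    nlinarith [norm_nonneg lam]
  have b2 : ‖(1 / 4 : ℂ) • φ ((1 : Matrix (Fin n) (Fin n) ℂ) - Cᴴ * C)‖ ≤ 1 / 2 := by
    refine le_trans (norm_smul_le ((1 : ℂ) / 4) (φ ((1 : Matrix (Fin n) (Fin n) ℂ) - Cᴴ * C))) ?_
    have hq : ‖(1 / 4 : ℂ)‖ = 1 / 4 := by
      simp [map_div₀]
    rw [hq]
    linarith
  have hadd := norm_add_le (lam • φ (Hm C t))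
    ((1 / 4 : ℂ) • φ ((1 : Matrix (Fin n) (Fin n) ℂ) - Cᴴ * C))
  have hsq : ‖lam ^ 2‖ = ‖lam‖ ^ 2 := norm_pow lam 2
  rw [hsq]
  nlinarith

/-- the general matrix family -/
noncomputable def Dm (C G : Matrix (Fin n) (Fin n) ℂ) (x y : ℂ) : Matrix (Fin n) (Fin n) ℂ :=
  1 - x • C - y • Cᴴ - (x * y) • G

lemma exp_mul_exp_neg (t : ℝ) :
    Complex.exp ((t:ℂ) * I) * Complex.exp (-(t:ℂ) * I) = 1 := by
  rw [← Complex.exp_add]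
  rw [show (t:ℂ) * I + -(t:ℂ) * I = 0 by ring]
  exact Complex.exp_zero

lemma chain (C G : Matrix (Fin n) (Fin n) ℂ)
    (h : ∀ (t : ℝ) (s : ℂ), s ≠ 0 → ‖s‖ ≤ 4⁻¹ →
      (Dm C G (Complex.exp (-(t:ℂ) * I) * s) (Complex.exp ((t:ℂ) * I) * s)).det
        = (Dm C G s s).det) :
    ∃ q : ℂ[X], ∀ x y : ℂ, (Dm C G x y).det = q.eval (x * y) := by
  -- the diagonal polynomial
  have hr : ∀ z : ℂ, (detPoly 1 (-(C + Cᴴ)) (-G)).eval z = (Dm C G z z).det := by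
    intro z
    rw [detPoly_eval, Dm]
    congr 1
    module
  -- Step A : extend the small-s hypothesis to all of ℂ
  have hA : ∀ (t : ℝ) (z : ℂ),
      (Dm C G (Complex.exp (-(t:ℂ) * I) * z) (Complex.exp ((t:ℂ) * I) * z)).det
        = (Dm C G z z).det := by
    intro t z
    have hp : ∀ x : ℂ,
        (detPoly 1 (-(Complex.exp (-(t:ℂ) * I) • C + Complex.exp ((t:ℂ) * I) • Cᴴ)) (-G)).eval x
          = (Dm C G (Complex.exp (-(t:ℂ) * I) * x) (Complex.exp ((t:ℂ) * I) * x)).det := by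
      intro x
      rw [detPoly_eval, Dm]
      congr 1
      rw [show (Complex.exp (-(t:ℂ) * I) * x) * (Complex.exp ((t:ℂ) * I) * x) = x ^ 2 by
        have := exp_mul_exp_neg t
        calc (Complex.exp (-(t:ℂ) * I) * x) * (Complex.exp ((t:ℂ) * I) * x)
            = (Complex.exp ((t:ℂ) * I) * Complex.exp (-(t:ℂ) * I)) * (x * x) := by ring
        _ = x ^ 2 := by rw [this]; ring]
      module
    calc (Dm C G (Complex.exp (-(t:ℂ) * I) * z) (Complex.exp ((t:ℂ) * I) * z)).det
        = (detPoly 1 (-(Complex.exp (-(t:ℂ) * I) • C + Complex.exp ((t:ℂ) * I) • Cᴴ))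
            (-G)).eval z := (hp z).symm
      _ = (detPoly 1 (-(C + Cᴴ)) (-G)).eval z := by
          apply eval_eq_of_infinite infinite_small
          intro s hs
          rw [hp s, hr s]
          exact h t s hs.1 hs.2
      _ = (Dm C G z z).det := hr z
  -- Step B : det (u•1 - z•C - (u²z)•Cᴴ - (u z²)•G) = u^n ⬝ det (Dm z z)
  have hB : ∀ (z u : ℂ),
      (u • (1 : Matrix (Fin n) (Fin n) ℂ) - z • C - (u ^ 2 * z) • Cᴴ - (u * (z * z)) • G).det
        = (Dm C G z z).det * u ^ n := by
    intro z u
    have hp : ∀ v : ℂ, (detPoly (-(z • C)) ((1 : Matrix (Fin n) (Fin n) ℂ) - (z * z) • G)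
        (-(z • Cᴴ))).eval v
        = (v • (1 : Matrix (Fin n) (Fin n) ℂ) - z • C - (v ^ 2 * z) • Cᴴ
          - (v * (z * z)) • G).det := by
      intro v
      rw [detPoly_eval]
      congr 1
      module
    have hq : ∀ v : ℂ, (Polynomial.C ((Dm C G z z).det) * X ^ n).eval v
        = (Dm C G z z).det * v ^ n := by
      intro v; simp
    rw [← hp u, ← hq u]
    apply eval_eq_of_infinite infinite_circle
    rintro v ⟨t, rfl⟩
    rw [hp, hq]
    set a := Complex.exp ((t:ℂ) * I) with ha
    set b := Complex.exp (-(t:ℂ) * I) with hb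
    have hab : a * b = 1 := exp_mul_exp_neg t
    have e1 : a * (b * z) = z := by
      calc a * (b * z) = (a * b) * z := by ring
      _ = z := by rw [hab]; ring
    have e2 : a * (a * z) = a ^ 2 * z := by ring
    have e3 : a * ((b * z) * (a * z)) = a * (z * z) := by
      calc a * ((b * z) * (a * z)) = (a * b) * (a * (z * z)) := by ring
      _ = a * (z * z) := by rw [hab]; ring
    have hsm : a • Dm C G (b * z) (a * z)
        = a • (1 : Matrix (Fin n) (Fin n) ℂ) - z • C - (a ^ 2 * z) • Cᴴ - (a * (z * z)) • G := by
      have expand : a • Dm C G (b * z) (a * z)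
          = a • (1 : Matrix (Fin n) (Fin n) ℂ) - (a * (b * z)) • C - (a * (a * z)) • Cᴴ
            - (a * ((b * z) * (a * z))) • G := by
        rw [Dm]; module
      rw [expand, e1, e2, e3]
    have hdet : (a • Dm C G (b * z) (a * z)).det = a ^ n * (Dm C G (b * z) (a * z)).det := by
      rw [Matrix.det_smul, Fintype.card_fin]
    rw [← hsm, hdet, hA t z]
    ring
  -- Step B' : scaling invariance
  have hB' : ∀ (u : ℂ), u ≠ 0 → ∀ z : ℂ,
      (Dm C G (u⁻¹ * z) (u * z)).det = (Dm C G z z).det := by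
    intro u hu z
    have e1 : u * (u⁻¹ * z) = z := by
      field_simp
    have e2 : u * (u * z) = u ^ 2 * z := by ring
    have e3 : u * ((u⁻¹ * z) * (u * z)) = u * (z * z) := by
      field_simp
    have hsm : u • Dm C G (u⁻¹ * z) (u * z)
        = u • (1 : Matrix (Fin n) (Fin n) ℂ) - z • C - (u ^ 2 * z) • Cᴴ - (u * (z * z)) • G := by
      have expand : u • Dm C G (u⁻¹ * z) (u * z)
          = u • (1 : Matrix (Fin n) (Fin n) ℂ) - (u * (u⁻¹ * z)) • C - (u * (u * z)) • Cᴴ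
            - (u * ((u⁻¹ * z) * (u * z))) • G := by
        rw [Dm]; module
      rw [expand, e1, e2, e3]
    have hdet : (u • Dm C G (u⁻¹ * z) (u * z)).det
        = u ^ n * (Dm C G (u⁻¹ * z) (u * z)).det := by
      rw [Matrix.det_smul, Fintype.card_fin]
    have := hB z u
    rw [← hsm, hdet] at this
    have hun : (u : ℂ) ^ n ≠ 0 := pow_ne_zero _ hu
    exact mul_left_cancel₀ hun (this.trans (mul_comm _ _))
  -- Step C : evenness of the diagonal
  have heven : ∀ z : ℂ, (detPoly 1 (-(C + Cᴴ)) (-G)).eval (-z)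
      = (detPoly 1 (-(C + Cᴴ)) (-G)).eval z := by
    intro z
    rw [hr, hr]
    have hm1 : ((-1 : ℂ)) ≠ 0 := by norm_num
    have := hB' (-1) hm1 z
    rw [show ((-1 : ℂ))⁻¹ * z = -z by norm_num, show ((-1 : ℂ)) * z = -z by ring] at this
    exact this
  obtain ⟨q, hq⟩ := exists_poly_of_even heven
  refine ⟨q, ?_⟩
  -- D1 : the case x ≠ 0 ∧ y ≠ 0
  have hD1 : ∀ x y : ℂ, x ≠ 0 → y ≠ 0 → (Dm C G x y).det = q.eval (x * y) := by
    intro x y hx hy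
    obtain ⟨z, hz2⟩ := IsAlgClosed.exists_pow_nat_eq (x * y) (n := 2) (by norm_num)
    have hxy : x * y ≠ 0 := mul_ne_zero hx hy
    have hz : z ≠ 0 := by
      rintro rfl
      rw [show ((0:ℂ)) ^ 2 = 0 by ring] at hz2
      exact hxy hz2.symm
    set u := z * x⁻¹ with hu
    have hu0 : u ≠ 0 := mul_ne_zero hz (inv_ne_zero hx)
    have harg1 : u⁻¹ * z = x := by
      rw [hu]
      field_simp
    have harg2 : u * z = y := by
      rw [hu]
      have : z * x⁻¹ * z = (z ^ 2) * x⁻¹ := by ring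
      rw [this, hz2, mul_comm x y, mul_assoc, mul_inv_cancel₀ hx, mul_one]
    calc (Dm C G x y).det = (Dm C G (u⁻¹ * z) (u * z)).det := by rw [harg1, harg2]
      _ = (Dm C G z z).det := hB' u hu0 z
      _ = q.eval (z ^ 2) := by rw [← hr z, hq z]
      _ = q.eval (x * y) := by rw [hz2]
  -- D2 : y ≠ 0, all x
  have hD2 : ∀ y : ℂ, y ≠ 0 → ∀ x : ℂ, (Dm C G x y).det = q.eval (x * y) := by
    intro y hy x
    have hp : ∀ v : ℂ, (detPoly ((1 : Matrix (Fin n) (Fin n) ℂ) - y • Cᴴ) (-(C + y • G))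
        0).eval v = (Dm C G v y).det := by
      intro v
      rw [detPoly_eval, Dm]
      congr 1
      module
    have hqc : ∀ v : ℂ, (q.comp (Polynomial.C y * X)).eval v = q.eval (v * y) := by
      intro v
      rw [Polynomial.eval_comp, Polynomial.eval_mul, Polynomial.eval_C, Polynomial.eval_X,
        mul_comm]
    rw [← hp x, ← hqc x]
    apply eval_eq_of_infinite infinite_nonzero
    intro s hs
    rw [hp s, hqc s]
    exact hD1 s y hs hy
  -- D3 : all x y
  intro x y
  have hp : ∀ v : ℂ, (detPoly ((1 : Matrix (Fin n) (Fin n) ℂ) - x • C) (-(Cᴴ + x • G))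
      0).eval v = (Dm C G x v).det := by
    intro v
    rw [detPoly_eval, Dm]
    congr 1
    module
  have hqc : ∀ v : ℂ, (q.comp (Polynomial.C x * X)).eval v = q.eval (x * v) := by
    intro v
    rw [Polynomial.eval_comp, Polynomial.eval_mul, Polynomial.eval_C, Polynomial.eval_X]
  rw [← hp y, ← hqc y]
  apply eval_eq_of_infinite infinite_nonzero
  intro s hs
  rw [hp s, hqc s]
  exact hD2 s hs x

-- new content ------------------------------------------------------------

lemma Pfun_eq (C : Matrix (Fin n) (Fin n) ℂ) (x y : ℂ) :
    Pfun C x y = (Dm C 0 x y).det := by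
  rw [Pfun, Dm]
  congr 1
  rw [smul_zero, sub_zero]

lemma Qfun_eq (C : Matrix (Fin n) (Fin n) ℂ) (x y : ℂ) :
    Qfun C x y = (Dm C ((1 : Matrix (Fin n) (Fin n) ℂ) - Cᴴ * C) x y).det := rfl

lemma abs_inv_two_s {s : ℂ} (hs0 : s ≠ 0) (hs4 : ‖s‖ ≤ 4⁻¹) :
    2 ≤ ‖(2 * s)⁻¹‖ := by
  have h2s : ‖2 * s‖ ≤ 2⁻¹ := by
    rw [norm_mul]
    have : ‖(2:ℂ)‖ = 2 := by norm_num
    rw [this]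
    linarith
  have hpos : 0 < ‖2 * s‖ := by
    apply norm_pos_iff.mpr
    exact mul_ne_zero two_ne_zero hs0
  rw [norm_inv]
  calc (2 : ℝ) = (2⁻¹:ℝ)⁻¹ := by norm_num
  _ ≤ (‖2 * s‖)⁻¹ := by gcongr

lemma exp_zero_I : Complex.exp (-(((0:ℝ)):ℂ) * I) = 1 ∧ Complex.exp ((((0:ℝ)):ℂ) * I) = 1 := by
  norm_num

/-- key scaling identity for part 1 -/
lemma key1 (C : Matrix (Fin n) (Fin n) ℂ) {μ s : ℂ} (hμs : μ * s = 1 / 2) (t : ℝ) :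
    μ • Dm C 0 (Complex.exp (-(t:ℂ) * I) * s) (Complex.exp ((t:ℂ) * I) * s)
      = μ • (1 : Matrix (Fin n) (Fin n) ℂ) - Hm C t := by
  have expand : μ • Dm C 0 (Complex.exp (-(t:ℂ) * I) * s) (Complex.exp ((t:ℂ) * I) * s)
      = μ • (1 : Matrix (Fin n) (Fin n) ℂ)
        - (μ * (Complex.exp (-(t:ℂ) * I) * s)) • C
        - (μ * (Complex.exp ((t:ℂ) * I) * s)) • Cᴴ := by
    rw [Dm]; module
  have e1 : μ * (Complex.exp (-(t:ℂ) * I) * s) = 1 / 2 * Complex.exp (-(t:ℂ) * I) := by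
    calc μ * (Complex.exp (-(t:ℂ) * I) * s) = (μ * s) * Complex.exp (-(t:ℂ) * I) := by ring
    _ = 1 / 2 * Complex.exp (-(t:ℂ) * I) := by rw [hμs]
  have e2 : μ * (Complex.exp ((t:ℂ) * I) * s) = 1 / 2 * Complex.exp ((t:ℂ) * I) := by
    calc μ * (Complex.exp ((t:ℂ) * I) * s) = (μ * s) * Complex.exp ((t:ℂ) * I) := by ring
    _ = 1 / 2 * Complex.exp ((t:ℂ) * I) := by rw [hμs]
  rw [expand, e1, e2, Hm]
  module

/-- key scaling identity for part 2 -/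
lemma key2 (C : Matrix (Fin n) (Fin n) ℂ) {lam s : ℂ} (hμs : lam * s = 1 / 2) (t : ℝ) :
    (lam ^ 2) • Dm C ((1 : Matrix (Fin n) (Fin n) ℂ) - Cᴴ * C)
        (Complex.exp (-(t:ℂ) * I) * s) (Complex.exp ((t:ℂ) * I) * s)
      = lam ^ 2 • (1 : Matrix (Fin n) (Fin n) ℂ) - lam • Hm C t
        - (1 / 4 : ℂ) • ((1 : Matrix (Fin n) (Fin n) ℂ) - Cᴴ * C) := by
  set G := (1 : Matrix (Fin n) (Fin n) ℂ) - Cᴴ * C with hG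
  have expand : (lam ^ 2) • Dm C G (Complex.exp (-(t:ℂ) * I) * s) (Complex.exp ((t:ℂ) * I) * s)
      = lam ^ 2 • (1 : Matrix (Fin n) (Fin n) ℂ)
        - (lam ^ 2 * (Complex.exp (-(t:ℂ) * I) * s)) • C
        - (lam ^ 2 * (Complex.exp ((t:ℂ) * I) * s)) • Cᴴ
        - (lam ^ 2 * ((Complex.exp (-(t:ℂ) * I) * s) * (Complex.exp ((t:ℂ) * I) * s))) • G := by
    rw [Dm]; module
  have e1 : lam ^ 2 * (Complex.exp (-(t:ℂ) * I) * s)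
      = lam * (1 / 2 * Complex.exp (-(t:ℂ) * I)) := by
    calc lam ^ 2 * (Complex.exp (-(t:ℂ) * I) * s)
        = lam * ((lam * s) * Complex.exp (-(t:ℂ) * I)) := by ring
    _ = _ := by rw [hμs]
  have e2 : lam ^ 2 * (Complex.exp ((t:ℂ) * I) * s)
      = lam * (1 / 2 * Complex.exp ((t:ℂ) * I)) := by
    calc lam ^ 2 * (Complex.exp ((t:ℂ) * I) * s)
        = lam * ((lam * s) * Complex.exp ((t:ℂ) * I)) := by ring
    _ = _ := by rw [hμs]
  have e3 : lam ^ 2 * ((Complex.exp (-(t:ℂ) * I) * s) * (Complex.exp ((t:ℂ) * I) * s))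
      = 1 / 4 := by
    have hab : Complex.exp ((t:ℂ) * I) * Complex.exp (-(t:ℂ) * I) = 1 := exp_mul_exp_neg t
    calc lam ^ 2 * ((Complex.exp (-(t:ℂ) * I) * s) * (Complex.exp ((t:ℂ) * I) * s))
        = (Complex.exp ((t:ℂ) * I) * Complex.exp (-(t:ℂ) * I)) * ((lam * s) * (lam * s)) := by
          ring
    _ = 1 / 4 := by rw [hab, hμs]; norm_num
  rw [expand, e1, e2, e3, Hm]
  module

lemma part1_fwd (C : Matrix (Fin n) (Fin n) ℂ)
    (hC : ‖Matrix.toEuclideanCLM (𝕜 := ℂ) C‖ ≤ 1)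
    (hT : ∀ (t : ℝ) (μ : ℂ),
        IsUnit (μ • (1 : Matrix (Fin n) (Fin n) ℂ) - Hm C t) →
        Matrix.trace ((μ • (1 : Matrix (Fin n) (Fin n) ℂ) - Hm C t)⁻¹ * Km C t) = 0) :
    ∃ q : Polynomial ℂ, ∀ x y : ℂ, Pfun C x y = q.eval (x * y) := by
  have hconst : ∀ μ : ℂ, 2 ≤ ‖μ‖ → ∀ t : ℝ,
      (μ • (1 : Matrix (Fin n) (Fin n) ℂ) - Hm C t).det
        = (μ • (1 : Matrix (Fin n) (Fin n) ℂ) - Hm C 0).det := by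
    intro μ hμ
    apply det_const_of_deriv_zero (M' := fun t => -Km C t)
    · intro t₀ i j; exact hasDerivAt_M1 C μ t₀ i j
    · intro t; exact isUnit_M1 C hC hμ t
    · intro t
      rw [Matrix.mul_neg, Matrix.trace_neg, hT t μ (isUnit_M1 C hC hμ t), neg_zero]
  have hchain : ∀ (t : ℝ) (s : ℂ), s ≠ 0 → ‖s‖ ≤ 4⁻¹ →
      (Dm C 0 (Complex.exp (-(t:ℂ) * I) * s) (Complex.exp ((t:ℂ) * I) * s)).det
        = (Dm C 0 s s).det := by
    intro t s hs0 hs4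
    set μ := (2 * s)⁻¹ with hμdef
    have hs2 : (2 : ℂ) * s ≠ 0 := mul_ne_zero two_ne_zero hs0
    have hμ0 : μ ≠ 0 := inv_ne_zero hs2
    have hμs : μ * s = 1 / 2 := by
      rw [hμdef]
      field_simp
    have habs : 2 ≤ ‖μ‖ := abs_inv_two_s hs0 hs4
    have hd := hconst μ habs t
    rw [← key1 C hμs t, ← key1 C hμs 0] at hd
    rw [Matrix.det_smul, Matrix.det_smul, Fintype.card_fin] at hd
    have hcc := mul_left_cancel₀ (pow_ne_zero n hμ0) hd
    rw [show Complex.exp (-((0:ℝ):ℂ) * I) = 1 by norm_num,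
      show Complex.exp (((0:ℝ):ℂ) * I) = 1 by norm_num, one_mul] at hcc
    exact hcc
  obtain ⟨q, hq⟩ := chain C 0 hchain
  exact ⟨q, fun x y => by rw [Pfun_eq]; exact hq x y⟩

lemma part1_bwd (C : Matrix (Fin n) (Fin n) ℂ) (q : Polynomial ℂ)
    (hq : ∀ x y : ℂ, Pfun C x y = q.eval (x * y)) (t₀ : ℝ) (μ : ℂ)
    (hu : IsUnit (μ • (1 : Matrix (Fin n) (Fin n) ℂ) - Hm C t₀)) :
    Matrix.trace ((μ • (1 : Matrix (Fin n) (Fin n) ℂ) - Hm C t₀)⁻¹ * Km C t₀) = 0 := by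
  have hp : ∀ (t' : ℝ) (v : ℂ), (detPoly (-Hm C t') 1 0).eval v
      = (v • (1 : Matrix (Fin n) (Fin n) ℂ) - Hm C t').det := by
    intro t' v
    rw [detPoly_eval]
    congr 1
    module
  have hgen : ∀ (t' : ℝ) (v : ℂ), v ≠ 0 →
      (v • (1 : Matrix (Fin n) (Fin n) ℂ) - Hm C t').det
        = v ^ n * q.eval ((2 * v)⁻¹ * (2 * v)⁻¹) := by
    intro t' v hv
    set s := (2 * v)⁻¹ with hsdef
    have hs2 : (2 : ℂ) * v ≠ 0 := mul_ne_zero two_ne_zero hv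
    have hμs : v * s = 1 / 2 := by
      rw [hsdef]; field_simp
    have hkey := key1 C hμs t'
    have hdet := congrArg Matrix.det hkey
    rw [Matrix.det_smul, Fintype.card_fin] at hdet
    have hab : Complex.exp ((t':ℂ) * I) * Complex.exp (-(t':ℂ) * I) = 1 := exp_mul_exp_neg t'
    have hxy : (Complex.exp (-(t':ℂ) * I) * s) * (Complex.exp ((t':ℂ) * I) * s) = s * s := by
      calc (Complex.exp (-(t':ℂ) * I) * s) * (Complex.exp ((t':ℂ) * I) * s)
          = (Complex.exp ((t':ℂ) * I) * Complex.exp (-(t':ℂ) * I)) * (s * s) := by ring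
      _ = s * s := by rw [hab]; ring
    rw [← hdet, ← Pfun_eq, hq, hxy]
  have hconst : ∀ t : ℝ, (μ • (1 : Matrix (Fin n) (Fin n) ℂ) - Hm C t).det
      = (μ • (1 : Matrix (Fin n) (Fin n) ℂ) - Hm C 0).det := by
    intro t
    calc (μ • (1 : Matrix (Fin n) (Fin n) ℂ) - Hm C t).det
        = (detPoly (-Hm C t) 1 0).eval μ := (hp t μ).symm
      _ = (detPoly (-Hm C 0) 1 0).eval μ := by
          apply eval_eq_of_infinite infinite_nonzero
          intro v hv
          rw [hp t v, hp 0 v, hgen t v hv, hgen 0 v hv]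
      _ = (μ • (1 : Matrix (Fin n) (Fin n) ℂ) - Hm C 0).det := hp 0 μ
  have htr := trace_eq_zero_of_const (M := fun t => μ • (1 : Matrix (Fin n) (Fin n) ℂ) - Hm C t)
    (M' := -Km C t₀) (fun i j => hasDerivAt_M1 C μ t₀ i j) hu hconst
  rw [Matrix.mul_neg, Matrix.trace_neg, neg_eq_zero] at htr
  exact htr

lemma part2_fwd (C : Matrix (Fin n) (Fin n) ℂ)
    (hC : ‖Matrix.toEuclideanCLM (𝕜 := ℂ) C‖ ≤ 1)
    (hT : ∀ (t : ℝ) (lam : ℂ),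
        IsUnit (lam ^ 2 • (1 : Matrix (Fin n) (Fin n) ℂ) - lam • Hm C t
          - (1 / 4 : ℂ) • ((1 : Matrix (Fin n) (Fin n) ℂ) - Cᴴ * C)) →
        Matrix.trace ((lam ^ 2 • (1 : Matrix (Fin n) (Fin n) ℂ) - lam • Hm C t
          - (1 / 4 : ℂ) • ((1 : Matrix (Fin n) (Fin n) ℂ) - Cᴴ * C))⁻¹
            * (lam • Km C t)) = 0) :
    ∃ q : Polynomial ℂ, ∀ x y : ℂ, Qfun C x y = q.eval (x * y) := by
  have hconst : ∀ lam : ℂ, 2 ≤ ‖lam‖ → ∀ t : ℝ,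
      (lam ^ 2 • (1 : Matrix (Fin n) (Fin n) ℂ) - lam • Hm C t
        - (1 / 4 : ℂ) • ((1 : Matrix (Fin n) (Fin n) ℂ) - Cᴴ * C)).det
      = (lam ^ 2 • (1 : Matrix (Fin n) (Fin n) ℂ) - lam • Hm C 0
        - (1 / 4 : ℂ) • ((1 : Matrix (Fin n) (Fin n) ℂ) - Cᴴ * C)).det := by
    intro lam hlam
    apply det_const_of_deriv_zero (M' := fun t => -(lam • Km C t))
    · intro t₀ i j; exact hasDerivAt_M2 C lam t₀ i j
    · intro t; exact isUnit_M2 C hC hlam t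
    · intro t
      rw [Matrix.mul_neg, Matrix.trace_neg, hT t lam (isUnit_M2 C hC hlam t), neg_zero]
  have hchain : ∀ (t : ℝ) (s : ℂ), s ≠ 0 → ‖s‖ ≤ 4⁻¹ →
      (Dm C ((1 : Matrix (Fin n) (Fin n) ℂ) - Cᴴ * C)
          (Complex.exp (-(t:ℂ) * I) * s) (Complex.exp ((t:ℂ) * I) * s)).det
        = (Dm C ((1 : Matrix (Fin n) (Fin n) ℂ) - Cᴴ * C) s s).det := by
    intro t s hs0 hs4
    set lam := (2 * s)⁻¹ with hldef
    have hs2 : (2 : ℂ) * s ≠ 0 := mul_ne_zero two_ne_zero hs0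
    have hl0 : lam ≠ 0 := inv_ne_zero hs2
    have hμs : lam * s = 1 / 2 := by
      rw [hldef]; field_simp
    have habs : 2 ≤ ‖lam‖ := abs_inv_two_s hs0 hs4
    have hd := hconst lam habs t
    rw [← key2 C hμs t, ← key2 C hμs 0] at hd
    rw [Matrix.det_smul, Matrix.det_smul, Fintype.card_fin] at hd
    have hcc := mul_left_cancel₀ (pow_ne_zero n (pow_ne_zero 2 hl0)) hd
    rw [show Complex.exp (-((0:ℝ):ℂ) * I) = 1 by norm_num,
      show Complex.exp (((0:ℝ):ℂ) * I) = 1 by norm_num, one_mul] at hcc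
    exact hcc
  obtain ⟨q, hq⟩ := chain C ((1 : Matrix (Fin n) (Fin n) ℂ) - Cᴴ * C) hchain
  exact ⟨q, fun x y => by rw [Qfun_eq]; exact hq x y⟩

lemma part2_bwd (C : Matrix (Fin n) (Fin n) ℂ) (q : Polynomial ℂ)
    (hq : ∀ x y : ℂ, Qfun C x y = q.eval (x * y)) (t₀ : ℝ) (lam : ℂ)
    (hu : IsUnit (lam ^ 2 • (1 : Matrix (Fin n) (Fin n) ℂ) - lam • Hm C t₀
      - (1 / 4 : ℂ) • ((1 : Matrix (Fin n) (Fin n) ℂ) - Cᴴ * C))) :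
    Matrix.trace ((lam ^ 2 • (1 : Matrix (Fin n) (Fin n) ℂ) - lam • Hm C t₀
      - (1 / 4 : ℂ) • ((1 : Matrix (Fin n) (Fin n) ℂ) - Cᴴ * C))⁻¹
        * (lam • Km C t₀)) = 0 := by
  have hconst : ∀ t : ℝ, (lam ^ 2 • (1 : Matrix (Fin n) (Fin n) ℂ) - lam • Hm C t
      - (1 / 4 : ℂ) • ((1 : Matrix (Fin n) (Fin n) ℂ) - Cᴴ * C)).det
      = (lam ^ 2 • (1 : Matrix (Fin n) (Fin n) ℂ) - lam • Hm C 0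
      - (1 / 4 : ℂ) • ((1 : Matrix (Fin n) (Fin n) ℂ) - Cᴴ * C)).det := by
    by_cases hl0 : lam = 0
    · intro t
      subst hl0
      have hz : ∀ t' : ℝ, (0:ℂ) ^ 2 • (1 : Matrix (Fin n) (Fin n) ℂ) - (0:ℂ) • Hm C t'
          - (1 / 4 : ℂ) • ((1 : Matrix (Fin n) (Fin n) ℂ) - Cᴴ * C)
          = -((1 / 4 : ℂ) • ((1 : Matrix (Fin n) (Fin n) ℂ) - Cᴴ * C)) := by
        intro t'; module
      rw [hz t, hz 0]
    · intro t
      set s := (2 * lam)⁻¹ with hsdef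
      have hs2 : (2 : ℂ) * lam ≠ 0 := mul_ne_zero two_ne_zero hl0
      have hμs : lam * s = 1 / 2 := by
        rw [hsdef]; field_simp
      have hgen : ∀ t' : ℝ, (lam ^ 2 • (1 : Matrix (Fin n) (Fin n) ℂ) - lam • Hm C t'
          - (1 / 4 : ℂ) • ((1 : Matrix (Fin n) (Fin n) ℂ) - Cᴴ * C)).det
          = (lam ^ 2) ^ n * q.eval (s * s) := by
        intro t'
        have hkey := key2 C hμs t'
        have hdet := congrArg Matrix.det hkey
        rw [Matrix.det_smul, Fintype.card_fin] at hdet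
        have hab : Complex.exp ((t':ℂ) * I) * Complex.exp (-(t':ℂ) * I) = 1 :=
          exp_mul_exp_neg t'
        have hxy : (Complex.exp (-(t':ℂ) * I) * s) * (Complex.exp ((t':ℂ) * I) * s) = s * s := by
          calc (Complex.exp (-(t':ℂ) * I) * s) * (Complex.exp ((t':ℂ) * I) * s)
              = (Complex.exp ((t':ℂ) * I) * Complex.exp (-(t':ℂ) * I)) * (s * s) := by ring
          _ = s * s := by rw [hab]; ring
        rw [← hdet, ← Qfun_eq, hq, hxy]
      rw [hgen t, hgen 0]
  have htr := trace_eq_zero_of_const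
    (M := fun t => lam ^ 2 • (1 : Matrix (Fin n) (Fin n) ℂ) - lam • Hm C t
      - (1 / 4 : ℂ) • ((1 : Matrix (Fin n) (Fin n) ℂ) - Cᴴ * C))
    (M' := -(lam • Km C t₀)) (fun i j => hasDerivAt_M2 C lam t₀ i j) hu hconst
  rw [Matrix.mul_neg, Matrix.trace_neg, neg_eq_zero] at htr
  exact htr


end Stmt10Proof

theorem stmt10 (n : ℕ) (C : Matrix (Fin n) (Fin n) ℂ)
    (hC : ‖Matrix.toEuclideanCLM (𝕜 := ℂ) C‖ ≤ 1) :
    ((∀ (t : ℝ) (μ : ℂ),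
        IsUnit (μ • (1 : Matrix (Fin n) (Fin n) ℂ) - Hm C t) →
        Matrix.trace ((μ • (1 : Matrix (Fin n) (Fin n) ℂ) - Hm C t)⁻¹ * Km C t) = 0) ↔
      ∃ q : Polynomial ℂ, ∀ x y : ℂ, Pfun C x y = q.eval (x * y)) ∧
    ((∀ (t : ℝ) (lam : ℂ),
        IsUnit (lam ^ 2 • (1 : Matrix (Fin n) (Fin n) ℂ) - lam • Hm C t
          - (1 / 4 : ℂ) • ((1 : Matrix (Fin n) (Fin n) ℂ) - Cᴴ * C)) →
        Matrix.trace ((lam ^ 2 • (1 : Matrix (Fin n) (Fin n) ℂ) - lam • Hm C t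
          - (1 / 4 : ℂ) • ((1 : Matrix (Fin n) (Fin n) ℂ) - Cᴴ * C))⁻¹
            * (lam • Km C t)) = 0) ↔
      ∃ q : Polynomial ℂ, ∀ x y : ℂ, Qfun C x y = q.eval (x * y)) := by
  constructor
  · constructor
    · intro hT
      exact Stmt10Proof.part1_fwd C hC hT
    · rintro ⟨q, hq⟩ t μ hu
      exact Stmt10Proof.part1_bwd C q hq t μ hu
  · constructor
    · intro hT
      exact Stmt10Proof.part2_fwd C hC hT
    · rintro ⟨q, hq⟩ t lam hu
      exact Stmt10Proof.part2_bwd C q hq t lam hu
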